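/- For 1 ≤ k ≤ n let L_k be the list obtained from the staircase list L_max by deleting the final letter s_1 of the k-th block, i.e. L_k is the concatenation (s_1)(s_2,s_1)⋯(s_{k−1},…,s_1)(s_k,…,s_2)(s_{k+1},…,s_1)⋯(s_n,…,s_1). Then for every permutation u of Fin (n+1) with u ≠ w_L there exist k ∈ {1,…,n} and a sublist M of L_k such that the product of M equals u. -/

import Mathlib

noncomputable section

/-- The adjacent transposition `s_r = (r, r+1)` (1-based indexing) in `Perm (Fin (n+1))`,
acting on `{1,…,n+1}` identified with `Fin (n+1)`. -/
def s (n : ℕ) (r : ℕ) : Equiv.Perm (Fin (n + 1)) := Equiv.swap (Fin.ofNat (n + 1) (r - 1)) (Fin.ofNat (n + 1) r)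

/-- The block `(s_b, s_{b-1}, …, s_a)`, recorded as the list of indices `[b, b-1, …, a]`. -/
def block (a b : ℕ) : List ℕ := (List.range' a (b + 1 - a)).reverse

/-- The staircase list `L_max`: concatenation of the blocks `(s_p, …, s_1)` for
`p = 1, …, n`, of length `n(n+1)/2`. -/
def Lmax (n : ℕ) : List ℕ :=
  (List.ofFn fun p : Fin n => block 1 ((p : ℕ) + 1)).flatten

/-- The list `L_k`, obtained from `L_max` by deleting the final letter `s_1` of the `k`-th
block:  `(s_1)(s_2,s_1)⋯(s_{k-1},…,s_1)(s_k,…,s_2)(s_{k+1},…,s_1)⋯(s_n,…,s_1)`. -/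
def Lk (n k : ℕ) : List ℕ :=
  (List.ofFn fun p : Fin n =>
    if (p : ℕ) + 1 = k then block 2 ((p : ℕ) + 1) else block 1 ((p : ℕ) + 1)).flatten

/-!
Reading the block `(s_p, …, s_a)` as a cycle, it sends `a - 1` to `p` and fixes everything above
`p`. Hence every permutation factors as a staircase whose `p`-th block is truncated to
`(s_p, …, s_{f p})` with `f p ≥ 1`: choose the last block so that it carries the preimage of the
largest point to that point, and recurse. The choice `f ≡ 1` is `L_max` itself, so for `u ≠ w_L`
some `f k ≥ 2`, and then the factorisation is a subword of `L_k`.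
-/

open Equiv Fin.NatCast

lemma block_eq_nil {a b : ℕ} (h : b < a) : block a b = [] := by
  simp [block, show b + 1 - a = 0 by omega]

lemma block_succ {a b : ℕ} (h : a ≤ b + 1) : block a (b + 1) = (b + 1) :: block a b := by
  rw [block, show b + 1 + 1 - a = (b + 1 - a) + 1 by omega, List.range'_concat,
    show a + 1 * (b + 1 - a) = b + 1 by omega, List.reverse_append]
  rfl

lemma block_sublist_block {i j : ℕ} (h : i ≤ j) (p : ℕ) : (block j p).Sublist (block i p) := by
  induction p with
  | zero => rcases Nat.eq_zero_or_pos j with rfl | hj <;> simp_all [block_eq_nil]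
  | succ p ih =>
    by_cases hj : j ≤ p + 1
    · rw [block_succ hj, block_succ (by omega)]
      exact ih.cons_cons _
    · rw [block_eq_nil (by omega)]
      exact List.nil_sublist _

lemma s_apply_of_lt {n r : ℕ} (hr : r ≤ n) {x : Fin (n + 1)} (hx : r < x.val) : s n r x = x := by
  apply Equiv.swap_apply_of_ne_of_ne <;> rintro rfl <;>
    simp only [Fin.val_ofNat, Nat.mod_eq_of_lt (show r < n + 1 by omega),
      Nat.mod_eq_of_lt (show r - 1 < n + 1 by omega)] at hx <;> omega

lemma prod_block_apply_of_lt {n p : ℕ} (j : ℕ) (hp : p ≤ n) {x : Fin (n + 1)} (hx : p < x.val) :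
    ((block j p).map (s n)).prod x = x := by
  induction p with
  | zero =>
    rcases Nat.eq_zero_or_pos j with rfl | hj
    · simp [block, s_apply_of_lt (Nat.zero_le n) hx]
    · simp [block_eq_nil hj]
  | succ p ih =>
    by_cases hj : j ≤ p + 1
    · rw [block_succ hj, List.map_cons, List.prod_cons, Perm.mul_apply, ih (by omega) (by omega),
        s_apply_of_lt hp hx]
    · simp [block_eq_nil (show p + 1 < j by omega)]

lemma prod_block_apply_self {n c p : ℕ} (hcp : c ≤ p) (hp : p ≤ n) :
    ((block (c + 1) p).map (s n)).prod (c : Fin (n + 1)) = (p : Fin (n + 1)) := by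
  induction p with
  | zero => simp [Nat.le_zero.mp hcp, block_eq_nil]
  | succ p ih =>
    rcases hcp.eq_or_lt with rfl | hlt
    · simp [block_eq_nil]
    · rw [block_succ (by omega), List.map_cons, List.prod_cons, Perm.mul_apply,
        ih (by omega) (by omega)]
      exact Equiv.swap_apply_left _ _

def staircaseWord (f : ℕ → ℕ) (m : ℕ) : List ℕ :=
  (List.ofFn fun p : Fin m => block (f ((p : ℕ) + 1)) ((p : ℕ) + 1)).flatten

lemma staircaseWord_succ (f : ℕ → ℕ) (m : ℕ) :
    staircaseWord f (m + 1) = staircaseWord f m ++ block (f (m + 1)) (m + 1) := by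
  rw [staircaseWord, List.ofFn_succ', List.concat_eq_append, List.flatten_append]
  simp [staircaseWord]

lemma Lmax_eq_staircaseWord (n : ℕ) : Lmax n = staircaseWord (fun _ => 1) n := rfl

lemma Lk_eq_staircaseWord (n k : ℕ) :
    Lk n k = staircaseWord (fun p => if p = k then 2 else 1) n := by
  unfold Lk staircaseWord
  congr 2
  funext p
  exact (apply_ite (block · _) _ _ _).symm

lemma staircaseWord_congr {f g : ℕ → ℕ} {m : ℕ} (h : ∀ p ∈ Finset.Icc 1 m, f p = g p) :
    staircaseWord f m = staircaseWord g m := by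
  unfold staircaseWord
  congr 2
  funext p
  rw [h _ (Finset.mem_Icc.mpr ⟨by omega, p.isLt⟩)]

lemma staircaseWord_sublist_of_le {f g : ℕ → ℕ} {m : ℕ} (h : ∀ p ∈ Finset.Icc 1 m, g p ≤ f p) :
    (staircaseWord f m).Sublist (staircaseWord g m) := by
  induction m with
  | zero => exact List.nil_sublist _
  | succ m ih =>
    rw [staircaseWord_succ, staircaseWord_succ]
    exact (ih fun p hp => h p (by simp at hp ⊢; omega)).append
      (block_sublist_block (h _ (by simp)) _)

lemma eq_one_of_forall_pos_apply_eq {n : ℕ} {u : Perm (Fin (n + 1))}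
    (hu : ∀ x : Fin (n + 1), 0 < x.val → u x = x) : u = 1 := by
  have h0 : u 0 = 0 := by
    by_contra h
    exact h (u.injective (hu (u 0) (Fin.pos_iff_ne_zero.mpr h)))
  ext x
  rcases Nat.eq_zero_or_pos x.val with hx | hx
  · rw [show x = 0 from Fin.ext hx, h0]; rfl
  · rw [hu x hx]; rfl

lemma exists_eq_prod_staircaseWord {n m : ℕ} (hm : m ≤ n) (u : Perm (Fin (n + 1)))
    (hu : ∀ x : Fin (n + 1), m < x.val → u x = x) :
    ∃ f : ℕ → ℕ, (∀ p, 1 ≤ f p) ∧ u = ((staircaseWord f m).map (s n)).prod := by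
  induction m generalizing u with
  | zero => exact ⟨fun _ => 1, fun _ => le_rfl, eq_one_of_forall_pos_apply_eq hu⟩
  | succ m ih =>
    set top : Fin (n + 1) := ((m + 1 : ℕ) : Fin (n + 1))
    have htop : top.val = m + 1 := Fin.val_cast_of_lt (by omega)
    set c := u⁻¹ top
    have huc : u c = top := u.apply_symm_apply top
    have hc : c.val ≤ m + 1 := by
      by_contra! h
      have := congrArg Fin.val (huc ▸ hu c h)
      omega
    set t := ((block (c.val + 1) (m + 1)).map (s n)).prod
    have htc : t c = top := by
      have h := prod_block_apply_self (n := n) hc (by omega)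
      rwa [Fin.cast_val_eq_self] at h
    have hut : ∀ x : Fin (n + 1), m < x.val → (u * t⁻¹) x = x := by
      intro x hx
      rcases (Nat.succ_le_of_lt hx).lt_or_eq with hx | hx
      · have htx : t x = x := prod_block_apply_of_lt _ (by omega) hx
        rw [Perm.mul_apply, Perm.inv_eq_iff_eq.mpr htx.symm, hu x (by omega)]
      · have hx : x = top := Fin.ext (by omega)
        rw [hx, Perm.mul_apply, Perm.inv_eq_iff_eq.mpr htc.symm, huc]
    obtain ⟨f, hf, hfu⟩ := ih (by omega) (u * t⁻¹) hut
    refine ⟨Function.update f (m + 1) (c.val + 1), fun p => ?_, ?_⟩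
    · rcases eq_or_ne p (m + 1) with rfl | hp <;> simp [*]
    · rw [staircaseWord_succ, staircaseWord_congr (g := f), List.map_append, List.prod_append,
        ← hfu, Function.update_self, inv_mul_cancel_right]
      intro p hp
      exact Function.update_of_ne (by simp at hp; omega) _ _

theorem stmt2_general (n : ℕ) (wL : Equiv.Perm (Fin (n + 1)))
    (hwL : wL = ((Lmax n).map (s n)).prod)
    (u : Equiv.Perm (Fin (n + 1))) (hu : u ≠ wL) :
    ∃ k ∈ Finset.Icc 1 n, ∃ M : List ℕ, M.Sublist (Lk n k) ∧ (M.map (s n)).prod = u := by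
  obtain ⟨f, hf, rfl⟩ := exists_eq_prod_staircaseWord le_rfl u fun x hx => absurd x.isLt (by omega)
  obtain ⟨k, hk, hfk⟩ : ∃ k ∈ Finset.Icc 1 n, f k ≠ 1 := by
    by_contra! h
    rw [hwL, Lmax_eq_staircaseWord, staircaseWord_congr h] at hu
    exact hu rfl
  refine ⟨k, hk, staircaseWord f n, ?_, rfl⟩
  rw [Lk_eq_staircaseWord]
  refine staircaseWord_sublist_of_le fun p _ => ?_
  split_ifs with hp
  · exact hp ▸ lt_of_le_of_ne (hf k) hfk.symm
  · exact hf p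

/-- Every permutation `u ≠ w_L` (where `w_L` is the product of the staircase list) is the
product of a sublist of some `L_k`, `1 ≤ k ≤ n`. -/
theorem stmt2 (n : ℕ) (hn : 1 ≤ n) (wL : Equiv.Perm (Fin (n + 1)))
    (hwL : wL = ((Lmax n).map (s n)).prod)
    (u : Equiv.Perm (Fin (n + 1))) (hu : u ≠ wL) :
    ∃ k ∈ Finset.Icc 1 n, ∃ M : List ℕ, M.Sublist (Lk n k) ∧ (M.map (s n)).prod = u :=
  stmt2_general n wL hwL u hu
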